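/- arXiv:2410.13728 — 4 statements merged into one kernel-verified Lean document; each statement's English description precedes it below -/
import Mathlib

section
/- Let A be a Deligne-finite k-linear abelian category over an algebraically closed field k, with a fixed ordering S_1,…,S_n of its simple objects. Then for each i, the standard object Δ_i is a projective cover of S_i in the Serre subcategory A_i, and the costandard object ∇_i is an injective hull of S_i in A_i. -/
open CategoryTheory CategoryTheory.Limits

universe v u

namespace HWPaper

variable {C : Type u} [Category.{v} C]

/-- `p : P ⟶ X` exhibits `P` as a projective cover of `X`:
`P` is projective, `p` is epi, and `p` is a superfluous epimorphism. -/
def IsProjCover (P X : C) (p : P ⟶ X) : Prop :=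
  Projective P ∧ Epi p ∧ ∀ ⦃Y : C⦄ (f : Y ⟶ P), Epi (f ≫ p) → Epi f

/-- `ι : X ⟶ I` exhibits `I` as an injective hull of `X`. -/
def IsInjHull (X I : C) (ι : X ⟶ I) : Prop :=
  Injective I ∧ Mono ι ∧ ∀ ⦃Y : C⦄ (f : I ⟶ Y), Mono (ι ≫ f) → Mono f

/-- `q : P ⟶ D` exhibits `D` as the maximal quotient of `P` lying in the class `mem`:
every quotient of `P` lying in `mem` factors through `q`. -/
def IsMaxQuotientIn (mem : C → Prop) (P D : C) (q : P ⟶ D) : Prop :=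
  Epi q ∧ mem D ∧ ∀ ⦃Q : C⦄ (e : P ⟶ Q), Epi e → mem Q → ∃ r : D ⟶ Q, q ≫ r = e

/-- `m : N ⟶ I` exhibits `N` as the maximal subobject of `I` lying in the class `mem`. -/
def IsMaxSubobjectIn (mem : C → Prop) (I N : C) (m : N ⟶ I) : Prop :=
  Mono m ∧ mem N ∧ ∀ ⦃M : C⦄ (s : M ⟶ I), Mono s → mem M → ∃ r : M ⟶ N, r ≫ m = s

/-- The extension closure of a class of objects in an abelian category. -/
inductive ExtClosure [Abelian C] (P : C → Prop) : C → Prop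
  | of (X : C) : P X → ExtClosure P X
  | zero (X : C) : IsZero X → ExtClosure P X
  | ext (S : ShortComplex C) : S.ShortExact → ExtClosure P S.X₁ → ExtClosure P S.X₃ →
      ExtClosure P S.X₂

variable (C) in
/-- The subgroup of relations coming from short exact sequences. -/
def K0Relations [Abelian C] : AddSubgroup (FreeAbelianGroup C) :=
  AddSubgroup.closure {x | ∃ S : ShortComplex C, S.ShortExact ∧
    x = FreeAbelianGroup.of S.X₂ - FreeAbelianGroup.of S.X₁ - FreeAbelianGroup.of S.X₃}

variable (C) in
/-- The Grothendieck group of an abelian category. -/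
def K0 [Abelian C] : Type u := FreeAbelianGroup C ⧸ K0Relations C

noncomputable instance [Abelian C] : AddCommGroup (K0 C) :=
  QuotientAddGroup.Quotient.addCommGroup _

/-- The class of an object in the Grothendieck group. -/
def K0.cls [Abelian C] (X : C) : K0 C := QuotientAddGroup.mk (FreeAbelianGroup.of X)

/-- The data of a Deligne-finite `k`-linear abelian category with an ordering
`S 0, …, S (n-1)` of its simple objects, together with projective covers, injective hulls,
standard and costandard objects, and the Jordan–Hölder multiplicity function. -/
structure DeligneData (k : Type v) [Field k] [IsAlgClosed k]
    (C : Type u) [Category.{v} C] [Abelian C] [Linear k C] [EnoughProjectives C]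
    (n : ℕ) where
  /-- the simple objects -/
  S : Fin n → C
  /-- the projective covers -/
  P : Fin n → C
  /-- the injective hulls -/
  I : Fin n → C
  /-- the standard objects -/
  Δ : Fin n → C
  /-- the costandard objects -/
  nabla : Fin n → C
  /-- the projective cover maps -/
  p : ∀ i, P i ⟶ S i
  /-- the injective hull maps -/
  ι : ∀ i, S i ⟶ I i
  /-- the quotient maps onto the standard objects -/
  q : ∀ i, P i ⟶ Δ i
  /-- the inclusions of the costandard objects -/
  m : ∀ i, nabla i ⟶ I i
  /-- the Jordan–Hölder multiplicity `[X : S j]` -/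
  mult : C → Fin n → ℕ
  homFinite : ∀ X Y : C, FiniteDimensional k (X ⟶ Y)
  ext1Finite : ∀ X Y : C, FiniteDimensional k (((Ext k C 1).obj (Opposite.op X)).obj Y)
  simple : ∀ i, Simple (S i)
  distinct : ∀ i j, Nonempty (S i ≅ S j) → i = j
  exhaustive : ∀ X : C, Simple X → ∃ i, Nonempty (X ≅ S i)
  projCover : ∀ i, IsProjCover (P i) (S i) (p i)
  injHull : ∀ i, IsInjHull (S i) (I i) (ι i)
  std : ∀ i, IsMaxQuotientIn (ExtClosure (fun X => ∃ j, j ≤ i ∧ Nonempty (X ≅ S j)))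
      (P i) (Δ i) (q i)
  costd : ∀ i, IsMaxSubobjectIn (ExtClosure (fun X => ∃ j, j ≤ i ∧ Nonempty (X ≅ S j)))
      (I i) (nabla i) (m i)
  mult_simple : ∀ i j, mult (S i) j = if i = j then 1 else 0
  mult_additive : ∀ T : ShortComplex C, T.ShortExact →
      ∀ j, mult T.X₂ j = mult T.X₁ j + mult T.X₃ j
  mult_eq_zero_iff : ∀ X : C, (∀ j, mult X j = 0) ↔ IsZero X

variable {k : Type v} [Field k] [IsAlgClosed k] [Abelian C] [Linear k C]
  [EnoughProjectives C] {n : ℕ}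

/-- The Serre subcategory `A_i`, i.e. the extension closure of `S 0, …, S i`. -/
def DeligneData.serre (D : DeligneData k C n) (i : Fin n) : C → Prop :=
  ExtClosure (fun X => ∃ j, j ≤ i ∧ Nonempty (X ≅ D.S j))

/-- `A` is a highest-weight category with respect to the given ordering of its simple
objects: `End (Δ i) ≅ k` and each `P i` lies in the extension closure of `Δ i, …, Δ (n-1)`. -/
def DeligneData.IsHighestWeight (D : DeligneData k C n) : Prop :=
  ∀ i, Nonempty (End (D.Δ i) ≃ₐ[k] k) ∧
    ExtClosure (fun X => ∃ j, i ≤ j ∧ Nonempty (X ≅ D.Δ j)) (D.P i)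


/-- `p : P ⟶ X` exhibits `P` as a projective cover of `X` inside the full subcategory of
objects satisfying `mem`: `P` and `X` satisfy `mem`, `P` has the lifting property against
all epimorphisms between objects satisfying `mem`, `p` is epi, and `p` is superfluous. -/
def IsProjCoverIn (mem : C → Prop) (P X : C) (p : P ⟶ X) : Prop :=
  mem P ∧ mem X ∧ Epi p ∧
    (∀ ⦃A B : C⦄ (g : A ⟶ B) (h : P ⟶ B), mem A → mem B → Epi g →
      ∃ t : P ⟶ A, t ≫ g = h) ∧
    (∀ ⦃Y : C⦄ (f : Y ⟶ P), mem Y → Epi (f ≫ p) → Epi f)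

/-- `ι : X ⟶ I` exhibits `I` as an injective hull of `X` inside the full subcategory of
objects satisfying `mem`. -/
def IsInjHullIn (mem : C → Prop) (X I : C) (ι : X ⟶ I) : Prop :=
  mem X ∧ mem I ∧ Mono ι ∧
    (∀ ⦃A B : C⦄ (g : A ⟶ B) (h : A ⟶ I), mem A → mem B → Mono g →
      ∃ t : B ⟶ I, g ≫ t = h) ∧
    (∀ ⦃Y : C⦄ (f : I ⟶ Y), mem Y → Mono (ι ≫ f) → Mono f)

section Aux

/-- The short exact sequence associated to a monomorphism. -/
lemma sesOfMono {X Y : C} (f : X ⟶ Y) [Mono f] :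
    (ShortComplex.mk f (cokernel.π f) (cokernel.condition f)).ShortExact :=
  { exact := ShortComplex.exact_cokernel f }

/-- The short exact sequence associated to an epimorphism. -/
lemma sesOfEpi {X Y : C} (f : X ⟶ Y) [Epi f] :
    (ShortComplex.mk (kernel.ι f) f (kernel.condition f)).ShortExact :=
  { exact := ShortComplex.exact_kernel f }

lemma mult_iso (D : DeligneData k C n) {X Y : C} (e : X ≅ Y) (j : Fin n) :
    D.mult X j = D.mult Y j := by
  have h := D.mult_additive _ (sesOfMono e.hom) j
  have hz : IsZero (cokernel e.hom) :=
    (isZero_zero C).of_iso (cokernel.ofEpi e.hom)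
  have h0 := (D.mult_eq_zero_iff _).mpr hz j
  simp only [ShortComplex.mk] at h
  omega

lemma mult_le_of_mono (D : DeligneData k C n) {X Y : C} (f : X ⟶ Y) [Mono f] (j : Fin n) :
    D.mult X j ≤ D.mult Y j := by
  have h := D.mult_additive _ (sesOfMono f) j
  simp only [ShortComplex.mk] at h
  omega

lemma mult_le_of_epi (D : DeligneData k C n) {X Y : C} (f : X ⟶ Y) [Epi f] (j : Fin n) :
    D.mult Y j ≤ D.mult X j := by
  have h := D.mult_additive _ (sesOfEpi f) j
  simp only [ShortComplex.mk] at h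
  omega

lemma serre_mult (D : DeligneData k C n) {i : Fin n} {X : C}
    (hX : ExtClosure (fun X => ∃ j, j ≤ i ∧ Nonempty (X ≅ D.S j)) X) :
    ∀ j, i < j → D.mult X j = 0 := by
  induction hX with
  | of X h =>
    obtain ⟨j', hj', ⟨e⟩⟩ := h
    intro j hj
    rw [mult_iso D e, D.mult_simple]
    have : j' ≠ j := fun hh => absurd (hh ▸ hj') (not_le.mpr hj)
    simp [this]
  | zero X h =>
    intro j hj
    exact (D.mult_eq_zero_iff X).mpr h j
  | ext S hS h1 h3 ih1 ih3 =>
    intro j hj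
    rw [D.mult_additive S hS j, ih1 j hj, ih3 j hj]

lemma serre_of_mult (D : DeligneData k C n) (i : Fin n) :
    ∀ (L : ℕ) (X : C), (∑ j, D.mult X j) = L → (∀ j, i < j → D.mult X j = 0) →
      D.serre i X := by
  intro L
  induction L using Nat.strong_induction_on with
  | _ L ih =>
    intro X hL h
    by_cases hz : IsZero X
    · exact ExtClosure.zero X hz
    by_cases hs : Simple X
    · obtain ⟨j, ⟨e⟩⟩ := D.exhaustive X hs
      have hji : j ≤ i := by
        by_contra hji
        have h1 := h j (lt_of_not_ge hji)
        rw [mult_iso D e, D.mult_simple] at h1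
        simp at h1
      exact ExtClosure.of X ⟨j, hji, ⟨e⟩⟩
    · have hnall : ¬ ∀ (Y : C) (f : Y ⟶ X), Mono f → (IsIso f ↔ f ≠ 0) := by
        intro hall
        exact hs ⟨fun {Y} f hf => hall Y f hf⟩
      push_neg at hnall
      obtain ⟨Y, f, hmono, hiff⟩ := hnall
      haveI := hmono
      rcases hiff with ⟨hiso, h0⟩ | ⟨hni, hf0⟩
      · exfalso
        apply hz
        rw [IsZero.iff_id_eq_zero]
        haveI := hiso
        calc 𝟙 X = inv f ≫ f := (IsIso.inv_hom_id f).symm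
          _ = inv f ≫ 0 := congrArg (CategoryStruct.comp (inv f)) h0
          _ = 0 := comp_zero
      · have hses := sesOfMono f
        have hY0 : ¬ IsZero Y := fun hY => hf0 (hY.eq_of_src f 0)
        have hC0 : ¬ IsZero (cokernel f) := by
          intro hc
          haveI : Epi f := Preadditive.epi_of_isZero_cokernel f hc
          exact hni (isIso_of_mono_of_epi f)
        have hadd : ∀ j, D.mult X j = D.mult Y j + D.mult (cokernel f) j := by
          intro j
          have := D.mult_additive _ hses j
          simpa using this
        have hsum : ∑ j, D.mult X j = (∑ j, D.mult Y j) + ∑ j, D.mult (cokernel f) j := by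
          rw [← Finset.sum_add_distrib]
          exact Finset.sum_congr rfl (fun j _ => hadd j)
        have hposY : 0 < ∑ j, D.mult Y j := by
          rcases Nat.eq_zero_or_pos (∑ j, D.mult Y j) with h0 | h0
          · exact absurd ((D.mult_eq_zero_iff Y).mp
              (fun j => (Finset.sum_eq_zero_iff.mp h0) j (Finset.mem_univ j))) hY0
          · exact h0
        have hposC : 0 < ∑ j, D.mult (cokernel f) j := by
          rcases Nat.eq_zero_or_pos (∑ j, D.mult (cokernel f) j) with h0 | h0
          · exact absurd ((D.mult_eq_zero_iff (cokernel f)).mp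
              (fun j => (Finset.sum_eq_zero_iff.mp h0) j (Finset.mem_univ j))) hC0
          · exact h0
        have hY := ih (∑ j, D.mult Y j) (by omega) Y rfl
          (fun j hj => by have := h j hj; have := hadd j; omega)
        have hC := ih (∑ j, D.mult (cokernel f) j) (by omega) (cokernel f) rfl
          (fun j hj => by have := h j hj; have := hadd j; omega)
        exact ExtClosure.ext _ hses hY hC

lemma serre_of_mono_serre (D : DeligneData k C n) (i : Fin n) {X Y : C} (f : Y ⟶ X)
    [Mono f] (hX : D.serre i X) : D.serre i Y :=
  serre_of_mult D i _ Y rfl (fun j hj =>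
    Nat.le_zero.mp ((serre_mult D hX j hj) ▸ mult_le_of_mono D f j))

lemma serre_of_epi_serre (D : DeligneData k C n) (i : Fin n) {X Y : C} (f : X ⟶ Y)
    [Epi f] (hX : D.serre i X) : D.serre i Y :=
  serre_of_mult D i _ Y rfl (fun j hj =>
    Nat.le_zero.mp ((serre_mult D hX j hj) ▸ mult_le_of_epi D f j))

end Aux

/-- **Lemma.** In a Deligne-finite `k`-linear abelian category with a fixed ordering of its
simple objects, the standard object `Δ i` is a projective cover of `S i` in the Serre
subcategory `A_i`, and the costandard object `∇ i` is an injective hull of `S i` in `A_i`.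
(The structure maps `Δ i ⟶ S i` and `S i ⟶ ∇ i` are the canonical factorisations of
`p i : P i ⟶ S i` through `q i` and of `ι i : S i ⟶ I i` through `m i`.) -/
theorem std_isProjCoverIn_and_costd_isInjHullIn (D : DeligneData k C n) (i : Fin n) :
    (∃ r : D.Δ i ⟶ D.S i, D.q i ≫ r = D.p i ∧
      IsProjCoverIn (D.serre i) (D.Δ i) (D.S i) r) ∧
    (∃ r : D.S i ⟶ D.nabla i, r ≫ D.m i = D.ι i ∧
      IsInjHullIn (D.serre i) (D.S i) (D.nabla i) r) := by
  have hSmem : D.serre i (D.S i) := ExtClosure.of _ ⟨i, le_refl i, ⟨Iso.refl _⟩⟩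
  obtain ⟨hq_epi, hΔmem, hmax⟩ := D.std i
  obtain ⟨hp_proj, hp_epi, hp_sup⟩ := D.projCover i
  obtain ⟨hm_mono, hNmem, hmax'⟩ := D.costd i
  obtain ⟨hI_inj, hι_mono, hι_ess⟩ := D.injHull i
  haveI := hq_epi; haveI := hp_proj; haveI := hp_epi
  haveI := hm_mono; haveI := hI_inj; haveI := hι_mono
  constructor
  · -- projective cover part
    obtain ⟨r, hr⟩ := hmax (D.p i) hp_epi hSmem
    haveI hqr : Epi (D.q i ≫ r) := hr ▸ hp_epi
    have hr_epi : Epi r := epi_of_epi (D.q i) r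
    refine ⟨r, hr, hΔmem, hSmem, hr_epi, ?_, ?_⟩
    · -- lifting property
      intro A B g h hA hB hg
      haveI := hg
      set s : D.P i ⟶ A := Projective.factorThru (D.q i ≫ h) g with hs
      have hfac : s ≫ g = D.q i ≫ h := Projective.factorThru_comp _ _
      have himg : D.serre i (Abelian.image s) :=
        serre_of_mono_serre D i (Abelian.image.ι s) hA
      obtain ⟨r', hr'⟩ := hmax (Abelian.factorThruImage s) inferInstance himg
      refine ⟨r' ≫ Abelian.image.ι s, ?_⟩
      rw [← cancel_epi (D.q i)]
      calc D.q i ≫ (r' ≫ Abelian.image.ι s) ≫ g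
          = (D.q i ≫ r') ≫ Abelian.image.ι s ≫ g := by
            simp only [Category.assoc]
        _ = (Abelian.factorThruImage s ≫ Abelian.image.ι s) ≫ g := by
            rw [hr']; simp only [Category.assoc]
        _ = s ≫ g := by rw [Abelian.image.fac]
        _ = D.q i ≫ h := hfac
    · -- superfluous
      intro Y f hY hf
      haveI := hf
      set m : Abelian.coimage f ⟶ D.Δ i := Abelian.factorThruCoimage f with hm
      haveI hmmono : Mono m := inferInstance
      haveI : Epi ((Abelian.coimage.π f ≫ m) ≫ r) := by
        rw [Abelian.coimage.fac f]; exact hf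
      haveI : Epi (Abelian.coimage.π f ≫ m ≫ r) := by
        rw [← Category.assoc]; infer_instance
      haveI hmr : Epi (m ≫ r) := epi_of_epi (Abelian.coimage.π f) (m ≫ r)
      -- pullback of q i along m
      haveI : Epi (pullback.fst m (D.q i)) := Abelian.epi_pullback_of_epi_g _ _
      haveI : Epi (pullback.snd m (D.q i) ≫ D.p i) := by
        rw [← hr, ← Category.assoc, ← pullback.condition, Category.assoc]
        exact epi_comp _ _
      have hsnd_epi : Epi (pullback.snd m (D.q i)) := hp_sup _ inferInstance
      haveI := hsnd_epi
      haveI : IsIso (pullback.snd m (D.q i)) := isIso_of_mono_of_epi _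
      have hfac2 : (inv (pullback.snd m (D.q i)) ≫ pullback.fst m (D.q i)) ≫ m = D.q i := by
        rw [Category.assoc, pullback.condition, ← Category.assoc, IsIso.inv_hom_id,
          Category.id_comp]
      haveI : Epi m := epi_of_epi_fac hfac2
      haveI : IsIso m := isIso_of_mono_of_epi m
      rw [← Abelian.coimage.fac f]
      exact epi_comp _ _
  · -- injective hull part
    obtain ⟨r, hr⟩ := hmax' (D.ι i) hι_mono hSmem
    haveI hrm : Mono (r ≫ D.m i) := hr ▸ hι_mono
    have hr_mono : Mono r := mono_of_mono r (D.m i)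
    refine ⟨r, hr, hSmem, hNmem, hr_mono, ?_, ?_⟩
    · -- extension property
      intro A B g h hA hB hg
      haveI := hg
      set s : B ⟶ D.I i := Injective.factorThru (h ≫ D.m i) g with hs
      have hfac : g ≫ s = h ≫ D.m i := Injective.comp_factorThru _ _
      have hcoimg : D.serre i (Abelian.coimage s) :=
        serre_of_epi_serre D i (Abelian.coimage.π s) hB
      obtain ⟨r', hr'⟩ := hmax' (Abelian.factorThruCoimage s) inferInstance hcoimg
      refine ⟨Abelian.coimage.π s ≫ r', ?_⟩
      rw [← cancel_mono (D.m i)]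
      calc (g ≫ Abelian.coimage.π s ≫ r') ≫ D.m i
          = g ≫ Abelian.coimage.π s ≫ (r' ≫ D.m i) := by
            simp only [Category.assoc]
        _ = g ≫ Abelian.coimage.π s ≫ Abelian.factorThruCoimage s := by rw [hr']
        _ = g ≫ s := by rw [Abelian.coimage.fac]
        _ = h ≫ D.m i := hfac
    · -- essential
      intro Y f hY hf
      haveI := hf
      set e : D.nabla i ⟶ Abelian.coimage f := Abelian.coimage.π f with he
      haveI heepi : Epi e := inferInstance
      haveI : Mono (r ≫ e ≫ Abelian.factorThruCoimage f) := by
        rw [Abelian.coimage.fac f]; exact hf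
      haveI : Mono ((r ≫ e) ≫ Abelian.factorThruCoimage f) := by
        rw [Category.assoc]; infer_instance
      haveI hre : Mono (r ≫ e) := mono_of_mono (r ≫ e) (Abelian.factorThruCoimage f)
      -- pushout of m i along e
      haveI : Mono (pushout.inl e (D.m i)) := Abelian.mono_pushout_of_mono_g _ _
      haveI : Mono (D.ι i ≫ pushout.inr e (D.m i)) := by
        rw [← hr, Category.assoc, ← pushout.condition, ← Category.assoc]
        exact mono_comp _ _
      have hinr_mono : Mono (pushout.inr e (D.m i)) := hι_ess _ inferInstance
      haveI := hinr_mono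
      haveI : IsIso (pushout.inr e (D.m i)) := isIso_of_mono_of_epi _
      have hfac2 : e ≫ (pushout.inl e (D.m i) ≫ inv (pushout.inr e (D.m i))) = D.m i := by
        rw [← Category.assoc, pushout.condition, Category.assoc, IsIso.hom_inv_id,
          Category.comp_id]
      haveI : Mono e := mono_of_mono_fac hfac2
      haveI : IsIso e := isIso_of_mono_of_epi e
      rw [← Abelian.coimage.fac f]
      exact mono_comp _ _

end HWPaper
end

section
/- Let A be a Hom-finite k-linear abelian category over an algebraically closed field k, and let Z be a stability function on A. If S is a Z-stable object of A, then End_A(S) ≅ k. -/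
open CategoryTheory CategoryTheory.Limits
open scoped ZeroObject

universe v u

namespace HWPaper

variable {C : Type u} [Category.{v} C]

/-- The upper half plane with the positive real axis removed:
`ℍ = { r·exp(iπφ) | r > 0, φ ∈ (0,1] }`, i.e. the set of nonzero complex numbers
whose argument lies in `(0, π]`. -/
def stabilityHalfPlane : Set ℂ := {z | 0 < z.arg}

/-- The phase `φ(z) ∈ (0,1]` of an element `z = r·exp(iπφ(z))` of `ℍ`. -/
noncomputable def phase (z : ℂ) : ℝ := z.arg / Real.pi

/-- A stability function on an abelian category: an additive homomorphism
`Z : K(A) → ℂ` sending every nonzero object into the half plane `ℍ`. -/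
def IsStabilityFunction [Abelian C] (Z : K0 C →+ ℂ) : Prop :=
  ∀ X : C, ¬ IsZero X → Z (K0.cls X) ∈ stabilityHalfPlane

/-- An object is `Z`-semistable if every nonzero proper subobject has phase at most
that of the object. -/
def IsZSemistable [Abelian C] (Z : K0 C →+ ℂ) (X : C) : Prop :=
  ¬ IsZero X ∧ ∀ ⦃Y : C⦄ (f : Y ⟶ X), Mono f → ¬ IsZero Y → ¬ IsIso f →
    phase (Z (K0.cls Y)) ≤ phase (Z (K0.cls X))

/-- An object is `Z`-stable if every nonzero proper subobject has phase strictly less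
than that of the object. -/
def IsZStable [Abelian C] (Z : K0 C →+ ℂ) (X : C) : Prop :=
  ¬ IsZero X ∧ ∀ ⦃Y : C⦄ (f : Y ⟶ X), Mono f → ¬ IsZero Y → ¬ IsIso f →
    phase (Z (K0.cls Y)) < phase (Z (K0.cls X))

/-- A Harder–Narasimhan filtration of `X`: a filtration
`0 = F 0 ⊂ F 1 ⊂ ⋯ ⊂ F d = X` whose factors (the cokernels of the inclusions) are
`Z`-semistable of strictly decreasing phase. -/
structure HNFiltration [Abelian C] (Z : K0 C →+ ℂ) (X : C) where
  /-- the length of the filtration -/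
  d : ℕ
  /-- the filtration steps -/
  F : Fin (d + 1) → C
  isZero_bot : IsZero (F 0)
  top_iso : Nonempty (F (Fin.last d) ≅ X)
  /-- the inclusion maps -/
  f : ∀ l : Fin d, F l.castSucc ⟶ F l.succ
  mono : ∀ l, Mono (f l)
  semistable : ∀ l, IsZSemistable Z (cokernel (f l))
  phases_strictAnti : ∀ l l' : Fin d, l < l' →
    phase (Z (K0.cls (cokernel (f l')))) < phase (Z (K0.cls (cokernel (f l))))

/-! A nonzero endomorphism `f` of a stable object `S` that is not an isomorphism cannot be a
monomorphism, so `0 → ker f → S → im f → 0` exhibits `S` as an extension of two nonzero proper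
subobjects, both of phase `< φ(S)`. Since `ℍ` is a convex sector of angle `π`, the phase of a sum
`Z(S) = Z(ker f) + Z(im f)` is at most the larger phase of the summands, a contradiction. Hence
`End S` is a finite-dimensional division algebra over the algebraically closed field `k`, so
each `a ∈ End S` has an eigenvalue `c`, and `a - c` is not invertible, hence zero. -/

section Grothendieck

variable [Abelian C]

lemma K0.cls_eq_add_of_shortExact {T : ShortComplex C} (hT : T.ShortExact) :
    K0.cls T.X₂ = K0.cls T.X₁ + K0.cls T.X₃ := by
  have hrel : FreeAbelianGroup.of T.X₂ - FreeAbelianGroup.of T.X₁ - FreeAbelianGroup.of T.X₃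
      ∈ K0Relations C := AddSubgroup.subset_closure ⟨T, hT, rfl⟩
  change (QuotientAddGroup.mk _ : K0 C) =
    QuotientAddGroup.mk (FreeAbelianGroup.of T.X₁ + FreeAbelianGroup.of T.X₃)
  rw [QuotientAddGroup.eq]
  convert neg_mem hrel using 1
  abel

lemma K0.cls_eq_zero_of_isZero {X : C} (hX : IsZero X) : K0.cls X = 0 := by
  have hT : (ShortComplex.mk (𝟙 X) (𝟙 X) (hX.eq_of_src _ _)).ShortExact :=
    { exact := (ShortComplex.exact_iff_epi _ (hX.eq_of_src _ _)).mpr inferInstance }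
  exact right_eq_add.mp (K0.cls_eq_add_of_shortExact hT)

lemma K0.cls_eq_of_iso {X Y : C} (e : X ≅ Y) : K0.cls X = K0.cls Y := by
  have hT : (ShortComplex.mk e.hom (0 : Y ⟶ 0) (by simp)).ShortExact :=
    { exact := (ShortComplex.exact_iff_epi _ rfl).mpr inferInstance
      epi_g := ⟨fun _ _ _ => (isZero_zero C).eq_of_src _ _⟩ }
  simpa [K0.cls_eq_zero_of_isZero (isZero_zero C)] using (K0.cls_eq_add_of_shortExact hT).symm

end Grothendieck

lemma im_mul_re_sub_re_mul_im_neg {u s : ℂ} (hu : 0 < u.arg) (hus : u.arg < s.arg) :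
    u.im * s.re - u.re * s.im < 0 := by
  have hu0 : u ≠ 0 := by rintro rfl; simp at hu
  have hs0 : s ≠ 0 := by rintro rfl; rw [Complex.arg_zero] at hus; linarith
  have hsin : u.im * s.re - u.re * s.im = ‖u‖ * ‖s‖ * Real.sin (u.arg - s.arg) := by
    rw [Real.sin_sub, ← Complex.norm_mul_sin_arg u, ← Complex.norm_mul_cos_arg u,
      ← Complex.norm_mul_sin_arg s, ← Complex.norm_mul_cos_arg s]
    ring
  rw [hsin]
  refine mul_neg_of_pos_of_neg (by positivity) (Real.sin_neg_of_neg_of_neg_pi_lt (by linarith) ?_)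
  linarith [Complex.arg_le_pi s]

lemma arg_add_le_max {z w : ℂ} (hz : 0 < z.arg) (hw : 0 < w.arg) :
    (z + w).arg ≤ max z.arg w.arg := by
  by_contra! h
  have hcz := im_mul_re_sub_re_mul_im_neg hz ((le_max_left _ _).trans_lt h)
  have hcw := im_mul_re_sub_re_mul_im_neg hw ((le_max_right _ _).trans_lt h)
  have hsum : (z.im * (z + w).re - z.re * (z + w).im) + (w.im * (z + w).re - w.re * (z + w).im)
      = 0 := by
    simp only [Complex.add_re, Complex.add_im]
    ring
  linarith

lemma shortExact_kernel_coimage [Abelian C] {X Y : C} (f : X ⟶ Y) :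
    (ShortComplex.mk (kernel.ι f) (Abelian.coimage.π f) (cokernel.condition _)).ShortExact where
  exact := ShortComplex.exact_of_g_is_cokernel _ (cokernelIsCokernel _)

section Stability

variable [Abelian C] {Z : K0 C →+ ℂ}

lemma IsStabilityFunction.map_cls_ne_zero (hZ : IsStabilityFunction Z) {X : C}
    (hX : ¬ IsZero X) : Z (K0.cls X) ≠ 0 := by
  intro h
  simpa [stabilityHalfPlane, h] using hZ X hX

lemma IsStabilityFunction.phase_le_max_of_shortExact (hZ : IsStabilityFunction Z)
    {T : ShortComplex C} (hT : T.ShortExact) (h₁ : ¬ IsZero T.X₁) (h₃ : ¬ IsZero T.X₃) :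
    phase (Z (K0.cls T.X₂)) ≤ max (phase (Z (K0.cls T.X₁))) (phase (Z (K0.cls T.X₃))) := by
  rw [K0.cls_eq_add_of_shortExact hT, map_add, phase, phase, phase,
    max_div_div_right Real.pi_pos.le]
  exact div_le_div_of_nonneg_right (arg_add_le_max (hZ _ h₁) (hZ _ h₃)) Real.pi_pos.le

lemma IsZStable.isIso_of_ne_zero (hZ : IsStabilityFunction Z) {S : C} (hS : IsZStable Z S)
    {f : S ⟶ S} (hf : f ≠ 0) : IsIso f := by
  by_contra hf_iso
  have hf_mono : ¬ Mono f := fun _ => (hS.2 f ‹_› hS.1 hf_iso).false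
  have hK : ¬ IsZero (kernel f) := fun h => hf_mono (Preadditive.mono_of_isZero_kernel f h)
  have hI : ¬ IsZero (Abelian.coimage f) := fun h => hf <| by
    rw [← Abelian.coimage.fac f, h.eq_of_src (Abelian.factorThruCoimage f) 0, comp_zero]
  have hK_lt := hS.2 (kernel.ι f) inferInstance hK fun _ => hf (eq_zero_of_epi_kernel f)
  have hI_lt := hS.2 (Abelian.factorThruCoimage f) inferInstance hI fun _ => by
    have hcls : K0.cls S = K0.cls (kernel f) + K0.cls (Abelian.coimage f) :=
      K0.cls_eq_add_of_shortExact (shortExact_kernel_coimage f)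
    rw [← K0.cls_eq_of_iso (asIso (Abelian.factorThruCoimage f))] at hcls
    exact hZ.map_cls_ne_zero hK (by rw [add_eq_right.mp hcls.symm, map_zero])
  exact (max_lt hK_lt hI_lt).not_ge
    (hZ.phase_le_max_of_shortExact (shortExact_kernel_coimage f) hK hI)

lemma IsZStable.isIso_iff_ne_zero (hZ : IsStabilityFunction Z) {S : C} (hS : IsZStable Z S)
    (f : S ⟶ S) : IsIso f ↔ f ≠ 0 := by
  refine ⟨?_, hS.isIso_of_ne_zero hZ⟩
  rintro hf rfl
  exact hS.1 ((isIsoZero_iff_source_target_isZero S S).mp hf).1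

end Stability

/-- **Lemma.** Let `C` be a Hom-finite `k`-linear abelian category over an algebraically
closed field `k`, and let `Z` be a stability function on `C`. Any `Z`-stable object `S`
has endomorphism algebra `End S ≅ k`. -/
theorem endAlgEquiv_of_isZStable {k : Type v} [Field k] [IsAlgClosed k]
    [Abelian C] [Linear k C] (homFinite : ∀ X Y : C, FiniteDimensional k (X ⟶ Y))
    (Z : K0 C →+ ℂ) (hZ : IsStabilityFunction Z) (S : C) (hS : IsZStable Z S) :
    Nonempty (End S ≃ₐ[k] k) := by
  have := homFinite S S
  have hrank : Module.finrank k (End S) = 1 :=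
    finrank_endomorphism_eq_one k (hS.isIso_iff_ne_zero hZ)
  exact ⟨(AlgEquiv.ofBijective (Algebra.ofId k (End S))
    (Module.Free.bijective_algebraMap_of_finrank_eq_one hrank)).symm⟩

end HWPaper
end

section
/- Let A be a Deligne-finite k-linear abelian category over an algebraically closed field k, with a fixed ordering S_1,…,S_n of its simple objects, and suppose [Δ_i : S_i] = 1 for each i. Then for any choice of phases 0 = φ_0 < φ_1 < … < φ_n < 1 there exist positive reals m(S_1),…,m(S_n) such that the stability function Z determined by Z(S_i) = m(S_i) e^{iπφ_i} satisfies φ_{i−1} < φ(Δ_i) ≤ φ_i for each i, with φ(Δ_i) = φ_i if and only if Δ_i = S_i; for such Z each standard object Δ_i is Z-stable, and φ(Δ_1) < φ(Δ_2) < … < φ(Δ_n). -/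
open CategoryTheory CategoryTheory.Limits

universe v u

namespace HWPaper

variable {C : Type u} [Category.{v} C]

variable {k : Type v} [Field k] [IsAlgClosed k] [Abelian C] [Linear k C]
  [EnoughProjectives C] {n : ℕ}

/-!
Put `Z (S j) = m j · exp (i θ j)` with `θ j = π φ (j+1) ∈ (0, π)`, so that `Z` is a stability
function. For `0 ≤ α < π`, the inequality `α < arg Z X` is the positivity of
`Im (exp (-i α) Z X) = ∑ j [X : S j] m j sin (θ j - α)`. The composition factors of `Δ i` are
among `S 0, …, S i`, whence `arg Z (Δ i) ≤ θ i`, with equality only if `S i` is the only factor.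
The masses are chosen recursively so large that at `α = π φ i` the factor `S i` outweighs the
lower ones, giving `π φ i < arg Z (Δ i)`. A proper subobject of `Δ i` has no factor `S i`, since
every nonzero quotient of `P i` maps onto `S i`; hence its phase is at most `φ i`.
-/

open scoped Real

noncomputable def triangularWeights (a : Fin n → Fin n → ℝ) (i : Fin n) : ℝ :=
  (1 + ∑ j : Finset.Iio i, |a i j| * triangularWeights a j) / a i i
termination_by i
decreasing_by exact (Finset.mem_Iio.mp j.2 : j.1 < i)

lemma triangularWeights_pos {a : Fin n → Fin n → ℝ} (hdiag : ∀ i, 0 < a i i) (i : Fin n) :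
    0 < triangularWeights a i := by
  induction i using WellFoundedLT.induction with
  | _ i ih =>
    rw [triangularWeights.eq_1]
    refine div_pos ?_ (hdiag i)
    have : 0 ≤ ∑ j : Finset.Iio i, |a i j| * triangularWeights a j :=
      Finset.sum_nonneg fun j _ =>
        mul_nonneg (abs_nonneg _) (ih j (Finset.mem_Iio.mp j.2)).le
    linarith

lemma mul_triangularWeights {a : Fin n → Fin n → ℝ} {i : Fin n} (hi : a i i ≠ 0) :
    a i i * triangularWeights a i
      = 1 + ∑ j ∈ Finset.Iio i, |a i j| * triangularWeights a j := by
  rw [triangularWeights.eq_1, mul_div_cancel₀ _ hi,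
    Finset.sum_coe_sort (Finset.Iio i) fun j => |a i j| * triangularWeights a j]

lemma exists_pos_sum_mul_pos_of_lowerTriangular {a : Fin n → Fin n → ℝ}
    (hdiag : ∀ i, 0 < a i i) (hlow : ∀ i j, i < j → a i j = 0) :
    ∃ w : Fin n → ℝ, (∀ i, 0 < w i) ∧ ∀ i, 0 < ∑ j, a i j * w j := by
  refine ⟨triangularWeights a, triangularWeights_pos hdiag, fun i => ?_⟩
  have hdiag_term := mul_triangularWeights (hdiag i).ne'
  set w := triangularWeights a
  have hw : ∀ j, 0 < w j := triangularWeights_pos hdiag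
  have hbelow : -∑ j ∈ Finset.Iio i, |a i j| * w j ≤ ∑ j ∈ Finset.Iio i, a i j * w j := by
    rw [← Finset.sum_neg_distrib]
    exact Finset.sum_le_sum fun j _ => by
      rw [← neg_mul]; exact mul_le_mul_of_nonneg_right (neg_abs_le _) (hw j).le
  have hsum : ∑ j, a i j * w j = a i i * w i + ∑ j ∈ Finset.Iio i, a i j * w j := by
    rw [← Finset.sum_subset (Finset.subset_univ (Finset.Iic i)) fun j _ hj => by
        rw [hlow i j (not_le.mp (Finset.mem_Iic.not.mp hj)), zero_mul],
      Finset.Iic_eq_cons_Iio, Finset.sum_cons]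
  linarith

lemma _root_.Real.sin_pos_iff_of_neg_pi_lt_of_lt_pi {x : ℝ} (hx₁ : -π < x) (hx₂ : x < π) :
    0 < Real.sin x ↔ 0 < x :=
  ⟨fun h => not_le.mp fun hx => h.not_ge (Real.sin_nonpos_of_nonpos_of_neg_pi_le hx hx₁.le),
    fun hx => Real.sin_pos_of_pos_of_lt_pi hx hx₂⟩

lemma im_exp_neg_mul_I_mul_ofReal_mul_exp (α r θ : ℝ) :
    (Complex.exp (-α * Complex.I) * (r * Complex.exp (θ * Complex.I))).im
      = r * Real.sin (θ - α) := by
  rw [mul_left_comm, ← Complex.exp_add, ← add_mul, ← Complex.ofReal_neg,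
    ← Complex.ofReal_add, Complex.im_ofReal_mul, Complex.exp_ofReal_mul_I_im, neg_add_eq_sub]

lemma im_exp_neg_mul_I_mul (α : ℝ) (z : ℂ) :
    (Complex.exp (-α * Complex.I) * z).im = ‖z‖ * Real.sin (z.arg - α) := by
  conv_lhs => rw [← Complex.norm_mul_exp_arg_mul_I z]
  rw [im_exp_neg_mul_I_mul_ofReal_mul_exp]

section RotatedImaginaryPart
variable {z : ℂ} {α : ℝ} (hz : 0 < z.im) (hα₀ : 0 ≤ α) (hα : α < π)
include hz hα₀ hα

lemma arg_sub_mem_Ioo : z.arg - α ∈ Set.Ioo (-π) π := by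
  have hnonneg := Complex.arg_nonneg_iff.mpr hz.le
  have hlt := Complex.arg_lt_pi_iff.mpr (Or.inr hz.ne')
  constructor <;> linarith

lemma lt_arg_iff_im_exp_neg_mul_I_mul_pos :
    α < z.arg ↔ 0 < (Complex.exp (-α * Complex.I) * z).im := by
  obtain ⟨h₁, h₂⟩ := arg_sub_mem_Ioo hz hα₀ hα
  have hnorm : 0 < ‖z‖ := norm_pos_iff.mpr fun h => by simp [h] at hz
  rw [im_exp_neg_mul_I_mul, mul_pos_iff_of_pos_left hnorm,
    Real.sin_pos_iff_of_neg_pi_lt_of_lt_pi h₁ h₂, sub_pos]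

lemma arg_eq_iff_im_exp_neg_mul_I_mul_eq_zero :
    z.arg = α ↔ (Complex.exp (-α * Complex.I) * z).im = 0 := by
  obtain ⟨h₁, h₂⟩ := arg_sub_mem_Ioo hz hα₀ hα
  have hnorm : ‖z‖ ≠ 0 := norm_ne_zero_iff.mpr fun h => by simp [h] at hz
  rw [im_exp_neg_mul_I_mul, mul_eq_zero, or_iff_right hnorm,
    Real.sin_eq_zero_iff_of_lt_of_lt h₁ h₂, sub_eq_zero]

end RotatedImaginaryPart

lemma arg_pos_of_im_pos {z : ℂ} (hz : 0 < z.im) : 0 < z.arg :=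
  (lt_arg_iff_im_exp_neg_mul_I_mul_pos hz le_rfl Real.pi_pos).mpr (by simpa using hz)

lemma lt_phase_iff {z : ℂ} {t : ℝ} : t < phase z ↔ π * t < z.arg := by
  rw [phase, lt_div_iff₀ Real.pi_pos, mul_comm]

lemma phase_le_iff {z : ℂ} {t : ℝ} : phase z ≤ t ↔ z.arg ≤ π * t := by
  rw [phase, div_le_iff₀ Real.pi_pos, mul_comm]

lemma phase_eq_iff {z : ℂ} {t : ℝ} : phase z = t ↔ z.arg = π * t := by
  rw [phase, div_eq_iff Real.pi_ne_zero, mul_comm]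

lemma phase_lt_phase_iff {z w : ℂ} : phase z < phase w ↔ z.arg < w.arg :=
  div_lt_div_iff_of_pos_right Real.pi_pos

omit [EnoughProjectives C] in
def K0.lift {G : Type*} [AddCommGroup G] (f : C → G)
    (hf : ∀ T : ShortComplex C, T.ShortExact → f T.X₂ = f T.X₁ + f T.X₃) : K0 C →+ G :=
  QuotientAddGroup.lift (K0Relations C) (FreeAbelianGroup.lift f) <| by
    rw [K0Relations, AddSubgroup.closure_le]
    rintro x ⟨T, hT, rfl⟩
    simp [hf T hT]

omit [EnoughProjectives C] in
@[simp]
lemma K0.lift_cls {G : Type*} [AddCommGroup G] (f : C → G)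
    (hf : ∀ T : ShortComplex C, T.ShortExact → f T.X₂ = f T.X₁ + f T.X₃) (X : C) :
    K0.lift f hf (K0.cls X) = f X :=
  FreeAbelianGroup.lift_apply_of f X

namespace DeligneData

variable (D : DeligneData k C n)

lemma mult_of_isZero {X : C} (hX : IsZero X) (j : Fin n) : D.mult X j = 0 :=
  (D.mult_eq_zero_iff X).mpr hX j

lemma exists_mult_ne_zero {X : C} (hX : ¬IsZero X) : ∃ j, D.mult X j ≠ 0 := by
  by_contra! h
  exact hX ((D.mult_eq_zero_iff X).mp h)

lemma mult_eq_add_mult_cokernel {X Y : C} (f : Y ⟶ X) [Mono f] (j : Fin n) :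
    D.mult X j = D.mult Y j + D.mult (cokernel f) j :=
  D.mult_additive (ShortComplex.mk f (cokernel.π f) (cokernel.condition f))
    (.mk' (ShortComplex.exact_of_g_is_cokernel _ (cokernelIsCokernel f)) ‹_› inferInstance) j

lemma mult_eq_mult_kernel_add {X Q : C} (e : X ⟶ Q) [Epi e] (j : Fin n) :
    D.mult X j = D.mult (kernel e) j + D.mult Q j :=
  D.mult_additive (ShortComplex.mk (kernel.ι e) e (kernel.condition e))
    (.mk' (ShortComplex.exact_of_f_is_kernel _ (kernelIsKernel e)) inferInstance ‹_›) j

lemma mult_congr {X Y : C} (e : X ≅ Y) (j : Fin n) : D.mult X j = D.mult Y j := by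
  rw [D.mult_eq_add_mult_cokernel e.hom j, D.mult_of_isZero (isZero_cokernel_of_epi e.hom),
    add_zero]

lemma mult_eq_zero_of_serre {i j : Fin n} {X : C} (hX : D.serre i X) (hij : i < j) :
    D.mult X j = 0 := by
  induction hX with
  | of X hX =>
    obtain ⟨l, hl, ⟨e⟩⟩ := hX
    rw [D.mult_congr e j, D.mult_simple l j, if_neg (ne_of_lt (hl.trans_lt hij))]
  | zero X hX => exact D.mult_of_isZero hX j
  | ext T hT _ _ ih₁ ih₃ => rw [D.mult_additive T hT j, ih₁, ih₃]

lemma mult_eq_zero_of_mono {X Y : C} (f : Y ⟶ X) [Mono f] {j : Fin n} (hX : D.mult X j = 0) :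
    D.mult Y j = 0 := by
  have := D.mult_eq_add_mult_cokernel f j
  omega

lemma mult_standard_of_lt {i j : Fin n} (hij : i < j) : D.mult (D.Δ i) j = 0 :=
  D.mult_eq_zero_of_serre (D.std i).2.1 hij

lemma exists_epi_simple_of_epi {i : Fin n} {Q : C} (e : D.P i ⟶ Q) [Epi e] (hQ : ¬IsZero Q) :
    ∃ r : Q ⟶ D.S i, Epi r := by
  obtain ⟨-, _, hsup⟩ := D.projCover i
  have := D.simple i
  have hker : kernel.ι e ≫ D.p i = 0 := by
    by_contra h
    have : Epi (kernel.ι e) := hsup _ (epi_of_nonzero_to_simple h)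
    have : IsIso (kernel.ι e) := isIso_of_mono_of_epi _
    exact hQ (IsZero.of_epi_eq_zero e (by simp [← cancel_epi (kernel.ι e)]))
  exact ⟨Abelian.epiDesc e (D.p i) hker, epi_of_epi_fac (Abelian.comp_epiDesc e (D.p i) hker)⟩

lemma one_le_mult_of_epi {i : Fin n} {Q : C} (e : D.P i ⟶ Q) [Epi e] (hQ : ¬IsZero Q) :
    1 ≤ D.mult Q i := by
  obtain ⟨r, _⟩ := D.exists_epi_simple_of_epi e hQ
  have := D.mult_eq_mult_kernel_add r i
  rw [D.mult_simple i i, if_pos rfl] at this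
  omega

lemma nonempty_iso_simple_of_epi {i : Fin n} {Q : C} (e : D.P i ⟶ Q) [Epi e]
    (hmult : ∀ j, D.mult Q j = D.mult (D.S i) j) : Nonempty (Q ≅ D.S i) := by
  have hQ : ¬IsZero Q := fun hQ => by
    simpa [D.mult_of_isZero hQ, D.mult_simple] using hmult i
  obtain ⟨r, _⟩ := D.exists_epi_simple_of_epi e hQ
  have hker : IsZero (kernel r) := (D.mult_eq_zero_iff _).mp fun j => by
    have := D.mult_eq_mult_kernel_add r j
    rw [hmult j] at this
    omega
  have : Mono r := Preadditive.mono_of_isZero_kernel r hker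
  have : IsIso r := isIso_of_mono_of_epi r
  exact ⟨asIso r⟩

variable {D}

lemma standard_not_isZero {i : Fin n} (hΔ : D.mult (D.Δ i) i = 1) : ¬IsZero (D.Δ i) :=
  fun h => by simp [D.mult_of_isZero h] at hΔ

lemma mult_eq_zero_of_mono_standard {i : Fin n} (hΔ : D.mult (D.Δ i) i = 1) {Y : C}
    (f : Y ⟶ D.Δ i) [Mono f] (hf : ¬IsIso f) : D.mult Y i = 0 := by
  have : Epi (D.q i) := (D.std i).1
  have hcoker : ¬IsZero (cokernel f) := fun h => by
    have : Epi f := Abelian.epi_of_cokernel_π_eq_zero f (h.eq_of_tgt _ _)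
    exact hf (isIso_of_mono_of_epi f)
  have := D.one_le_mult_of_epi (D.q i ≫ cokernel.π f) hcoker
  have := D.mult_eq_add_mult_cokernel f i
  omega

variable (D) (m θ : Fin n → ℝ)

noncomputable def charge : K0 C →+ ℂ :=
  K0.lift (fun X => ∑ j, (D.mult X j : ℂ) * (m j * Complex.exp (θ j * Complex.I)))
    fun T hT => by simp only [D.mult_additive T hT, Nat.cast_add, add_mul, Finset.sum_add_distrib]

lemma charge_cls (X : C) :
    D.charge m θ (K0.cls X) = ∑ j, (D.mult X j : ℂ) * (m j * Complex.exp (θ j * Complex.I)) :=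
  K0.lift_cls _ _ X

lemma charge_cls_simple (i : Fin n) :
    D.charge m θ (K0.cls (D.S i)) = m i * Complex.exp (θ i * Complex.I) := by
  simp [charge_cls, D.mult_simple]

lemma charge_cls_congr {X Y : C} (e : X ≅ Y) :
    D.charge m θ (K0.cls X) = D.charge m θ (K0.cls Y) := by
  simp only [charge_cls, D.mult_congr e]

lemma im_exp_neg_mul_I_mul_charge_cls (α : ℝ) (X : C) :
    (Complex.exp (-α * Complex.I) * D.charge m θ (K0.cls X)).im
      = ∑ j, (D.mult X j : ℝ) * (m j * Real.sin (θ j - α)) := by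
  rw [charge_cls, Finset.mul_sum, Complex.im_sum]
  refine Finset.sum_congr rfl fun j _ => ?_
  rw [mul_left_comm, ← Complex.ofReal_natCast, Complex.im_ofReal_mul,
    im_exp_neg_mul_I_mul_ofReal_mul_exp]

variable {D m θ}

lemma im_charge_cls_pos (hm : ∀ j, 0 < m j) (hθ : ∀ j, θ j ∈ Set.Ioo 0 π) {X : C}
    (hX : ¬IsZero X) : 0 < (D.charge m θ (K0.cls X)).im := by
  obtain ⟨j₀, hj₀⟩ := D.exists_mult_ne_zero hX
  have hterm : ∀ j, 0 ≤ m j * Real.sin (θ j) := fun j =>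
    mul_nonneg (hm j).le (Real.sin_pos_of_pos_of_lt_pi (hθ j).1 (hθ j).2).le
  have hterm₀ : 0 < m j₀ * Real.sin (θ j₀) :=
    mul_pos (hm j₀) (Real.sin_pos_of_pos_of_lt_pi (hθ j₀).1 (hθ j₀).2)
  have hrot := D.im_exp_neg_mul_I_mul_charge_cls m θ 0 X
  simp only [Complex.ofReal_zero, neg_zero, zero_mul, Complex.exp_zero, one_mul, sub_zero] at hrot
  rw [hrot]
  exact Finset.sum_pos' (fun j _ => mul_nonneg (Nat.cast_nonneg _) (hterm j))
    ⟨j₀, Finset.mem_univ _, mul_pos (by positivity) hterm₀⟩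

lemma isStabilityFunction_charge (hm : ∀ j, 0 < m j) (hθ : ∀ j, θ j ∈ Set.Ioo 0 π) :
    IsStabilityFunction (D.charge m θ) :=
  fun _ hX => arg_pos_of_im_pos (im_charge_cls_pos hm hθ hX)

lemma mult_mul_sin_sub_nonpos (hm : ∀ j, 0 < m j) (hθ : ∀ j, θ j ∈ Set.Ioo 0 π) {X : C}
    {α : ℝ} (hα : α < π) (hfac : ∀ j, D.mult X j ≠ 0 → θ j ≤ α) (j : Fin n) :
    (D.mult X j : ℝ) * (m j * Real.sin (θ j - α)) ≤ 0 := by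
  by_cases hj : D.mult X j = 0
  · simp [hj]
  · refine mul_nonpos_of_nonneg_of_nonpos (Nat.cast_nonneg _) (mul_nonpos_of_nonneg_of_nonpos
      (hm j).le (Real.sin_nonpos_of_nonpos_of_neg_pi_le ?_ ?_))
    · linarith [hfac j hj]
    · linarith [(hθ j).1]

lemma arg_charge_cls_le (hm : ∀ j, 0 < m j) (hθ : ∀ j, θ j ∈ Set.Ioo 0 π) {X : C}
    (hX : ¬IsZero X) {α : ℝ} (hα₀ : 0 ≤ α) (hα : α < π)
    (hfac : ∀ j, D.mult X j ≠ 0 → θ j ≤ α) :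
    (D.charge m θ (K0.cls X)).arg ≤ α := by
  rw [← not_lt, lt_arg_iff_im_exp_neg_mul_I_mul_pos (im_charge_cls_pos hm hθ hX) hα₀ hα,
    im_exp_neg_mul_I_mul_charge_cls, not_lt]
  exact Finset.sum_nonpos fun j _ => mult_mul_sin_sub_nonpos hm hθ hα hfac j

lemma mult_eq_zero_of_arg_charge_cls_eq (hm : ∀ j, 0 < m j) (hθ : ∀ j, θ j ∈ Set.Ioo 0 π)
    {X : C} (hX : ¬IsZero X) {α : ℝ} (hα₀ : 0 ≤ α) (hα : α < π)
    (hfac : ∀ j, D.mult X j ≠ 0 → θ j ≤ α) (harg : (D.charge m θ (K0.cls X)).arg = α)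
    {j : Fin n} (hj : θ j < α) : D.mult X j = 0 := by
  rw [arg_eq_iff_im_exp_neg_mul_I_mul_eq_zero (im_charge_cls_pos hm hθ hX) hα₀ hα,
    im_exp_neg_mul_I_mul_charge_cls] at harg
  have hterm := (Finset.sum_eq_zero_iff_of_nonpos fun j _ =>
    mult_mul_sin_sub_nonpos hm hθ hα hfac j).mp harg j (Finset.mem_univ j)
  have hsin : Real.sin (θ j - α) < 0 :=
    Real.sin_neg_of_neg_of_neg_pi_lt (by linarith) (by linarith [(hθ j).1])
  exact_mod_cast (mul_eq_zero.mp hterm).resolve_right (mul_neg_of_pos_of_neg (hm j) hsin).ne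

lemma exists_masses (hΔ : ∀ i, D.mult (D.Δ i) i = 1) {β : Fin n → ℝ} (hθ : ∀ j, θ j < π)
    (hβ : ∀ i, 0 ≤ β i) (hβθ : ∀ i, β i < θ i) :
    ∃ m : Fin n → ℝ, (∀ j, 0 < m j) ∧
      ∀ i, 0 < ∑ j, (D.mult (D.Δ i) j : ℝ) * (m j * Real.sin (θ j - β i)) := by
  obtain ⟨m, hm, hpos⟩ := exists_pos_sum_mul_pos_of_lowerTriangular
    (a := fun i j => (D.mult (D.Δ i) j : ℝ) * Real.sin (θ j - β i))
    (fun i => by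
      rw [hΔ i, Nat.cast_one, one_mul]
      exact Real.sin_pos_of_pos_of_lt_pi (by linarith [hβθ i]) (by linarith [hθ i, hβ i]))
    (fun i j hij => by rw [D.mult_standard_of_lt hij, Nat.cast_zero, zero_mul])
  exact ⟨m, hm, fun i => (hpos i).trans_eq (Finset.sum_congr rfl fun j _ => by ring)⟩

lemma lt_arg_charge_standard {i : Fin n} (hΔ : D.mult (D.Δ i) i = 1) (hm : ∀ j, 0 < m j)
    (hθ : ∀ j, θ j ∈ Set.Ioo 0 π) {β : ℝ} (hβ₀ : 0 ≤ β) (hβ : β < π)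
    (hmass : 0 < ∑ j, (D.mult (D.Δ i) j : ℝ) * (m j * Real.sin (θ j - β))) :
    β < (D.charge m θ (K0.cls (D.Δ i))).arg := by
  rwa [lt_arg_iff_im_exp_neg_mul_I_mul_pos (im_charge_cls_pos hm hθ (standard_not_isZero hΔ))
    hβ₀ hβ, im_exp_neg_mul_I_mul_charge_cls]

lemma theta_le_of_mult_standard_ne_zero (hθmono : Monotone θ) {i j : Fin n}
    (hj : D.mult (D.Δ i) j ≠ 0) : θ j ≤ θ i :=
  hθmono (not_lt.mp fun hij => hj (D.mult_standard_of_lt hij))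

lemma arg_charge_standard_le {i : Fin n} (hΔ : D.mult (D.Δ i) i = 1) (hm : ∀ j, 0 < m j)
    (hθ : ∀ j, θ j ∈ Set.Ioo 0 π) (hθmono : Monotone θ) :
    (D.charge m θ (K0.cls (D.Δ i))).arg ≤ θ i :=
  arg_charge_cls_le hm hθ (standard_not_isZero hΔ) (hθ i).1.le (hθ i).2
    fun _ => theta_le_of_mult_standard_ne_zero hθmono

lemma arg_charge_standard_eq_iff {i : Fin n} (hΔ : D.mult (D.Δ i) i = 1) (hm : ∀ j, 0 < m j)
    (hθ : ∀ j, θ j ∈ Set.Ioo 0 π) (hθmono : StrictMono θ) :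
    (D.charge m θ (K0.cls (D.Δ i))).arg = θ i ↔ Nonempty (D.Δ i ≅ D.S i) := by
  constructor
  · intro harg
    have : Epi (D.q i) := (D.std i).1
    refine D.nonempty_iso_simple_of_epi (D.q i) fun j => ?_
    rw [D.mult_simple]
    rcases lt_trichotomy j i with hji | rfl | hij
    · rw [if_neg hji.ne', mult_eq_zero_of_arg_charge_cls_eq hm hθ (standard_not_isZero hΔ)
        (hθ i).1.le (hθ i).2 (fun _ => theta_le_of_mult_standard_ne_zero hθmono.monotone) harg
        (hθmono hji)]
    · rw [if_pos rfl, hΔ]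
    · rw [if_neg hij.ne, D.mult_standard_of_lt hij]
  · rintro ⟨e⟩
    rw [charge_cls_congr D m θ e, charge_cls_simple, Complex.arg_real_mul _ (hm i),
      Complex.arg_exp_mul_I, toIocMod_eq_self]
    constructor <;> linarith [(hθ i).1, (hθ i).2]

lemma isZStable_charge_standard {i : Fin n} (hΔ : D.mult (D.Δ i) i = 1) (hm : ∀ j, 0 < m j)
    (hθ : ∀ j, θ j ∈ Set.Ioo 0 π) {β : ℝ} (hβ₀ : 0 ≤ β) (hβ : β < π)
    (hθβ : ∀ j, j < i → θ j ≤ β)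
    (hmass : 0 < ∑ j, (D.mult (D.Δ i) j : ℝ) * (m j * Real.sin (θ j - β))) :
    IsZStable (D.charge m θ) (D.Δ i) := by
  refine ⟨standard_not_isZero hΔ, fun Y f _ hY hf => phase_lt_phase_iff.mpr ?_⟩
  have hfac : ∀ j, D.mult Y j ≠ 0 → θ j ≤ β := fun j hj => by
    refine hθβ j (lt_of_le_of_ne (not_lt.mp fun hij => hj ?_) fun hji => hj ?_)
    · exact D.mult_eq_zero_of_mono f (D.mult_standard_of_lt hij)
    · exact hji ▸ mult_eq_zero_of_mono_standard hΔ f hf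
  exact (arg_charge_cls_le hm hθ hY hβ₀ hβ hfac).trans_lt
    (lt_arg_charge_standard hΔ hm hθ hβ₀ hβ hmass)

end DeligneData

open DeligneData

/-- **Lemma** (construction of a stability function making the standard objects stable).
Suppose `[Δ i : S i] = 1` for each `i`.  Then for any choice of phases
`0 = φ 0 < φ 1 < ⋯ < φ n < 1` there are positive reals `m i` such that the stability
function `Z` determined by `Z (S i) = m i · exp(iπ · φ (i+1))` satisfies
`φ i < φ(Δ i) ≤ φ (i+1)` for each `i`, with equality `φ(Δ i) = φ (i+1)` if and only if
`Δ i ≅ S i`; for such `Z` each standard object is `Z`-stable and the phases of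
`Δ 0, …, Δ (n-1)` are strictly increasing. -/
theorem exists_stabilityFunction_standard_stable (D : DeligneData k C n)
    (hΔ : ∀ i, D.mult (D.Δ i) i = 1)
    (φ : Fin (n + 1) → ℝ) (hφ0 : φ 0 = 0) (hφmono : StrictMono φ)
    (hφlast : φ (Fin.last n) < 1) :
    ∃ m : Fin n → ℝ, (∀ i, 0 < m i) ∧
      ∃ Z : K0 C →+ ℂ, IsStabilityFunction Z ∧
        (∀ i : Fin n, Z (K0.cls (D.S i)) =
          (m i : ℂ) * Complex.exp ((Real.pi * φ i.succ : ℝ) * Complex.I)) ∧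
        (∀ i : Fin n, φ i.castSucc < phase (Z (K0.cls (D.Δ i))) ∧
          phase (Z (K0.cls (D.Δ i))) ≤ φ i.succ) ∧
        (∀ i : Fin n, phase (Z (K0.cls (D.Δ i))) = φ i.succ ↔ Nonempty (D.Δ i ≅ D.S i)) ∧
        (∀ i, IsZStable Z (D.Δ i)) ∧
        (∀ i j : Fin n, i < j →
          phase (Z (K0.cls (D.Δ i))) < phase (Z (K0.cls (D.Δ j)))) := by
  set θ : Fin n → ℝ := fun j => π * φ j.succ
  set β : Fin n → ℝ := fun i => π * φ i.castSucc
  have hθ : ∀ j, θ j ∈ Set.Ioo 0 π := fun j =>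
    ⟨mul_pos Real.pi_pos (hφ0 ▸ hφmono (Fin.succ_pos j)),
      mul_lt_of_lt_one_right Real.pi_pos ((hφmono.monotone (Fin.le_last _)).trans_lt hφlast)⟩
  have hβ : ∀ i, 0 ≤ β i := fun i =>
    mul_nonneg Real.pi_pos.le (hφ0 ▸ hφmono.monotone (Fin.zero_le _))
  have hβθ : ∀ i, β i < θ i := fun i =>
    mul_lt_mul_of_pos_left (hφmono (Fin.castSucc_lt_succ (i := i))) Real.pi_pos
  have hθβ : ∀ j i, j < i → θ j ≤ β i := fun j i hji =>
    mul_le_mul_of_nonneg_left (hφmono.monotone (Fin.succ_le_castSucc_iff.mpr hji)) Real.pi_pos.le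
  have hθmono : StrictMono θ := fun j i hji => (hθβ j i hji).trans_lt (hβθ i)
  obtain ⟨m, hm, hmass⟩ := exists_masses hΔ (fun j => (hθ j).2) hβ hβθ
  have hlt : ∀ i, β i < (D.charge m θ (K0.cls (D.Δ i))).arg := fun i =>
    lt_arg_charge_standard (hΔ i) hm hθ (hβ i) ((hβθ i).trans (hθ i).2) (hmass i)
  have hle : ∀ i, (D.charge m θ (K0.cls (D.Δ i))).arg ≤ θ i := fun i =>
    arg_charge_standard_le (hΔ i) hm hθ hθmono.monotone
  refine ⟨m, hm, D.charge m θ, isStabilityFunction_charge hm hθ, charge_cls_simple D m θ,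
    fun i => ⟨lt_phase_iff.mpr (hlt i), phase_le_iff.mpr (hle i)⟩,
    fun i => phase_eq_iff.trans (arg_charge_standard_eq_iff (hΔ i) hm hθ hθmono),
    fun i => isZStable_charge_standard (hΔ i) hm hθ (hβ i) ((hβθ i).trans (hθ i).2)
      (fun j hji => hθβ j i hji) (hmass i),
    fun i j hij => phase_lt_phase_iff.mpr ((hle i).trans_lt ((hθβ i j hij).trans_lt (hlt j)))⟩

end HWPaper
end

section
/- Let Q be a finite quiver without loops with vertices 1,…,n, let I ⊂ kQ be an admissible ideal generated by paths with canonical generating set G of minimal-length paths in I, where k is an algebraically closed field. The conditions 'π^i_{ii} = 1 for each i and π^n_{ik} = Σ_{j=1}^{n} π^j_{ij} · π^j_{jk} for all 1 ≤ i, k ≤ n' and 'every maximal vertex of each path in G is external' are equivalent. -/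
open CategoryTheory

universe u

namespace HWPaper

/-- A finite quiver without loops on the ordered vertex set `Fin n`. -/
structure FinQuiver (n : ℕ) where
  /-- the arrows from `i` to `j` -/
  Arr : Fin n → Fin n → Type
  finite : ∀ i j, Finite (Arr i j)
  noLoops : ∀ i, IsEmpty (Arr i i)

variable {n : ℕ}

/-- The vertex set of a finite quiver, as a quiver. -/
def QVert (_ : FinQuiver n) : Type := Fin n

instance (Q : FinQuiver n) : Quiver (QVert Q) := ⟨fun i j => Q.Arr i j⟩

instance (Q : FinQuiver n) : LinearOrder (QVert Q) :=
  inferInstanceAs (LinearOrder (Fin n))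

instance (Q : FinQuiver n) : Fintype (QVert Q) :=
  inferInstanceAs (Fintype (Fin n))

/-- The list of vertices visited by a path (including its endpoints, with multiplicity). -/
def pathVerts {Q : FinQuiver n} {i : QVert Q} :
    ∀ {j : QVert Q}, Quiver.Path i j → List (QVert Q)
  | _, Quiver.Path.nil => [i]
  | j, Quiver.Path.cons p _ => pathVerts p ++ [j]

/-- The internal vertices of a path: all visited vertices except the two endpoints. -/
def internalVerts {Q : FinQuiver n} {i j : QVert Q} (p : Quiver.Path i j) :
    List (QVert Q) :=
  ((pathVerts p).drop 1).dropLast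

/-- `Idl` is (the set of paths spanning) a two-sided ideal of the path algebra generated
by paths: a set of paths closed under pre- and post-composition with arbitrary paths. -/
def IsPathIdeal (Q : FinQuiver n) (Idl : ∀ ⦃i j : QVert Q⦄, Quiver.Path i j → Prop) : Prop :=
  ∀ ⦃i j a b : QVert Q⦄ (u : Quiver.Path a i) (p : Quiver.Path i j) (v : Quiver.Path j b),
    Idl p → Idl ((u.comp p).comp v)

/-- The ideal `Idl` is admissible: it contains all sufficiently long paths and consists of
paths of length at least two. -/
def IsAdmissible (Q : FinQuiver n) (Idl : ∀ ⦃i j : QVert Q⦄, Quiver.Path i j → Prop) : Prop :=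
  (∃ N : ℕ, ∀ ⦃i j : QVert Q⦄ (p : Quiver.Path i j), N ≤ p.length → Idl p) ∧
  (∀ ⦃i j : QVert Q⦄ (p : Quiver.Path i j), Idl p → 2 ≤ p.length)

/-- `p` belongs to the canonical generating set `G` of the monomial ideal `Idl`:
`p` lies in `Idl` and is of minimal length, i.e. no proper factor of `p` lies in `Idl`. -/
def IsMinimalRel {Q : FinQuiver n} (Idl : ∀ ⦃i j : QVert Q⦄, Quiver.Path i j → Prop)
    {i j : QVert Q} (p : Quiver.Path i j) : Prop :=
  Idl p ∧ ∀ ⦃a b : QVert Q⦄ (u : Quiver.Path i a) (g : Quiver.Path a b)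
    (v : Quiver.Path b j), p = (u.comp g).comp v → Idl g →
      u.length = 0 ∧ v.length = 0

/-- `π^k_{i j}`: the number of paths from `i` to `j` in the full subquiver `Q_{≤ k}`
which do not lie in the ideal. -/
noncomputable def pathCountLe (Q : FinQuiver n)
    (Idl : ∀ ⦃i j : QVert Q⦄, Quiver.Path i j → Prop) (k i j : QVert Q) : ℕ :=
  Nat.card {p : Quiver.Path i j // (∀ v ∈ pathVerts p, v ≤ k) ∧ ¬ Idl p}

/-- `π^n_{i j}`: the number of paths from `i` to `j` in `Q` which do not lie in the ideal. -/
noncomputable def pathCount (Q : FinQuiver n)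
    (Idl : ∀ ⦃i j : QVert Q⦄, Quiver.Path i j → Prop) (i j : QVert Q) : ℕ :=
  Nat.card {p : Quiver.Path i j // ¬ Idl p}

/-- Green–Schroll's criterion: all maximal vertices of every path in the canonical
generating set `G` are external, i.e. no internal vertex of a minimal relation is
maximal among the vertices of that relation. -/
def GreenSchrollCondition (Q : FinQuiver n)
    (Idl : ∀ ⦃i j : QVert Q⦄, Quiver.Path i j → Prop) : Prop :=
  ∀ ⦃i j : QVert Q⦄ (p : Quiver.Path i j), IsMinimalRel Idl p →
    ∀ v ∈ internalVerts p, ∃ w ∈ pathVerts p, v < w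

/-- The numerical path-count criterion: `π^i_{i i} = 1` for each vertex `i`, and
`π^n_{i k} = ∑_j π^j_{i j} · π^j_{j k}` for all vertices `i, k`. -/
def PathCountCondition (Q : FinQuiver n)
    (Idl : ∀ ⦃i j : QVert Q⦄, Quiver.Path i j → Prop) : Prop :=
  (∀ i : QVert Q, pathCountLe Q Idl i i i = 1) ∧
  (∀ i k : QVert Q, pathCount Q Idl i k =
    ∑ j : QVert Q, pathCountLe Q Idl j i j * pathCountLe Q Idl j j k)

/-!
Split a path `p : i ⟶ k` outside the ideal at a vertex `j` of largest label: `p = u v` with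
`u, v` in `Q_{≤ j}` and outside the ideal. These peak factorizations number
`∑_j π^j_{ij} π^j_{jk}`, and every path outside the ideal is such a product. The condition
`π^j_{jj} = 1` (no nontrivial cycle at `j` in `Q_{≤ j}` avoids the ideal) makes the
factorization unique, since two peak factorizations of one path differ by such a cycle.

If every maximal vertex of every minimal relation is external, no minimal relation can pass
through the peak of `u v`, so `u v` avoids the ideal and the count is exact; the powers of a
nontrivial cycle at `j` in `Q_{≤ j}` would then all avoid the ideal, contradicting
admissibility, so `π^j_{jj} = 1`. Conversely, a minimal relation `u v` with an internal maximal
vertex `m` is a peak factorization whose product lies in the ideal, so it is counted on the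
right but not on the left.
-/

theorem _root_.Quiver.Path.exists_eq_comp_of_comp_eq_comp {V : Type*} [Quiver V] {a b c d : V}
    (p : Quiver.Path a b) (q : Quiver.Path b c) (r : Quiver.Path a d) (s : Quiver.Path d c)
    (h : p.comp q = r.comp s) (hle : s.length ≤ q.length) :
    ∃ w : Quiver.Path b d, r = p.comp w ∧ q = w.comp s := by
  induction q generalizing d with
  | nil =>
    have hs : s.length = 0 := Nat.le_zero.mp hle
    obtain rfl := Quiver.Path.eq_of_length_zero s hs
    obtain rfl := Quiver.Path.eq_nil_of_length_zero s hs
    exact ⟨.nil, by simpa using h.symm, rfl⟩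
  | cons q e ih =>
    cases s with
    | nil => exact ⟨q.cons e, by simpa using h.symm, rfl⟩
    | cons s f =>
      simp only [Quiver.Path.comp_cons] at h
      obtain rfl := Quiver.Path.obj_eq_of_cons_eq_cons h
      obtain rfl := eq_of_heq (Quiver.Path.hom_heq_of_cons_eq_cons h)
      obtain ⟨w, rfl, rfl⟩ := ih r s (eq_of_heq (Quiver.Path.heq_of_cons_eq_cons h))
        (by simpa using hle)
      exact ⟨w, rfl, rfl⟩

theorem _root_.Quiver.Path.finite_setOf_length_le {V : Type*} [Quiver V] [Finite V]
    [∀ a b : V, Finite (a ⟶ b)] (N : ℕ) (a b : V) :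
    {p : Quiver.Path a b | p.length ≤ N}.Finite := by
  induction N generalizing b with
  | zero =>
    refine Set.Subsingleton.finite fun p hp q hq => ?_
    have hp : p.length = 0 := Nat.le_zero.mp hp
    obtain rfl := Quiver.Path.eq_of_length_zero p hp
    rw [Quiver.Path.eq_nil_of_length_zero p hp,
      Quiver.Path.eq_nil_of_length_zero q (Nat.le_zero.mp hq)]
  | succ N ih =>
    refine ((ih b).union (Set.finite_iUnion fun c => Set.finite_iUnion fun e : c ⟶ b =>
      (ih c).image (·.cons e))).subset ?_
    rintro (_ | ⟨p, e⟩) hp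
    · exact Or.inl (by simp)
    · exact Or.inr (Set.mem_iUnion.2 ⟨_, Set.mem_iUnion.2 ⟨e, p, by simpa using hp, rfl⟩⟩)

theorem _root_.Quiver.Path.factor_trichotomy_of_comp_comp_eq_comp {V : Type*} [Quiver V]
    {i a b k m : V} {x : Quiver.Path i a} {g : Quiver.Path a b} {y : Quiver.Path b k}
    {u : Quiver.Path i m} {v : Quiver.Path m k} (h : (x.comp g).comp y = u.comp v) :
    (∃ y' : Quiver.Path b m, u = (x.comp g).comp y') ∨
      (∃ x' : Quiver.Path m a, v = (x'.comp g).comp y) ∨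
      ∃ (g₁ : Quiver.Path a m) (g₂ : Quiver.Path m b),
        g = g₁.comp g₂ ∧ g₁.length ≠ 0 ∧ g₂.length ≠ 0 := by
  rcases le_or_gt v.length y.length with hvy | hyv
  · obtain ⟨w, rfl, -⟩ := Quiver.Path.exists_eq_comp_of_comp_eq_comp _ _ _ _ h hvy
    exact Or.inl ⟨w, rfl⟩
  by_cases hgv : g.length + y.length ≤ v.length
  · rw [Quiver.Path.comp_assoc] at h
    obtain ⟨w, -, rfl⟩ := Quiver.Path.exists_eq_comp_of_comp_eq_comp _ _ _ _ h.symm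
      (by simpa using hgv)
    exact Or.inr (Or.inl ⟨w, by rw [Quiver.Path.comp_assoc]⟩)
  obtain ⟨w, hxg, rfl⟩ := Quiver.Path.exists_eq_comp_of_comp_eq_comp _ _ _ _ h.symm hyv.le
  simp only [Quiver.Path.length_comp] at hgv hyv
  obtain ⟨w', rfl, rfl⟩ := Quiver.Path.exists_eq_comp_of_comp_eq_comp _ _ _ _ hxg (by omega)
  simp only [Quiver.Path.length_comp] at hgv
  exact Or.inr (Or.inr ⟨w', w, rfl, by omega, by omega⟩)

instance (Q : FinQuiver n) (i j : QVert Q) : Finite (i ⟶ j) := Q.finite i j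

section Vertices

variable {Q : FinQuiver n}

theorem pathVerts_eq_vertices {i j : QVert Q} (p : Quiver.Path i j) :
    pathVerts p = p.vertices := by
  induction p with
  | nil => rfl
  | cons p e ih => simp [pathVerts, ih]

theorem mem_pathVerts_comp {i m k : QVert Q} {p : Quiver.Path i m} {q : Quiver.Path m k}
    {v : QVert Q} : v ∈ pathVerts (p.comp q) ↔ v ∈ pathVerts p ∨ v ∈ pathVerts q := by
  simp only [pathVerts_eq_vertices, Quiver.Path.vertices_comp, List.mem_append]
  refine ⟨Or.imp_left fun h => List.dropLast_subset _ h, Or.rec (fun h => ?_) Or.inr⟩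
  rw [← p.dropLast_append_end_eq, List.mem_append, List.mem_singleton] at h
  exact h.imp_right fun (hv : v = m) => hv ▸ q.start_mem_vertices

theorem mem_internalVerts_iff {i j m : QVert Q} {p : Quiver.Path i j} :
    m ∈ internalVerts p ↔ ∃ (p₁ : Quiver.Path i m) (p₂ : Quiver.Path m j),
      p = p₁.comp p₂ ∧ p₁.length ≠ 0 ∧ p₂.length ≠ 0 := by
  simp only [internalVerts, pathVerts_eq_vertices, List.mem_iff_getElem, List.getElem_dropLast,
    List.getElem_drop, List.length_dropLast, List.length_drop, Quiver.Path.vertices_length]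
  constructor
  · rintro ⟨k, hk, hm⟩
    obtain ⟨_, p₁, p₂, hp, hl, hv⟩ :=
      p.exists_eq_comp_and_length_eq_of_lt_length (1 + k) (by simp; omega)
    obtain rfl := hv.trans hm
    rw [hp, Quiver.Path.length_comp] at hk
    exact ⟨p₁, p₂, hp, by omega, by omega⟩
  · rintro ⟨p₁, p₂, rfl, h₁, h₂⟩
    refine ⟨p₁.length - 1, by simp; omega, ?_⟩
    simp [show 1 + (p₁.length - 1) = p₁.length by omega]

end Vertices

section Ideal

variable {Q : FinQuiver n} {Idl : ∀ ⦃i j : QVert Q⦄, Quiver.Path i j → Prop}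

theorem IsPathIdeal.comp_mem_right (hI : IsPathIdeal Q Idl) {i j k : QVert Q}
    {u : Quiver.Path i j} (hu : Idl u) (v : Quiver.Path j k) : Idl (u.comp v) := by
  simpa using hI .nil u v hu

theorem IsPathIdeal.comp_mem_left (hI : IsPathIdeal Q Idl) {i j k : QVert Q}
    (u : Quiver.Path i j) {v : Quiver.Path j k} (hv : Idl v) : Idl (u.comp v) := by
  simpa using hI u v .nil hv

theorem IsAdmissible.nil_notMem (hadm : IsAdmissible Q Idl) (i : QVert Q) :
    ¬ Idl (Quiver.Path.nil : Quiver.Path i i) := fun h => by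
  simpa using hadm.2 _ h

theorem IsAdmissible.finite_subtype (hadm : IsAdmissible Q Idl) {i j : QVert Q}
    {S : Quiver.Path i j → Prop} (hS : ∀ p, S p → ¬ Idl p) : Finite {p // S p} := by
  obtain ⟨N, hN⟩ := hadm.1
  exact Set.Finite.to_subtype <| (Quiver.Path.finite_setOf_length_le N i j).subset
    fun p hp => le_of_not_gt fun hlong => hS p hp (hN p hlong.le)

theorem exists_isMinimalRel_factor {i j : QVert Q} {p : Quiver.Path i j} (hp : Idl p) :
    ∃ (a b : QVert Q) (x : Quiver.Path i a) (g : Quiver.Path a b) (y : Quiver.Path b j),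
      p = (x.comp g).comp y ∧ IsMinimalRel Idl g := by
  induction hn : p.length using Nat.strong_induction_on generalizing i j with
  | _ N ih =>
  by_cases hmin : IsMinimalRel Idl p
  · exact ⟨_, _, .nil, p, .nil, by simp, hmin⟩
  simp only [IsMinimalRel, hp, true_and, not_forall] at hmin
  obtain ⟨a, b, u, g, v, rfl, hg, huv⟩ := hmin
  simp only [Quiver.Path.length_comp] at hn
  obtain ⟨c, d, x, g', y, rfl, hg'⟩ := ih g.length (by omega) hg rfl
  exact ⟨c, d, u.comp x, g', y.comp v, by simp [Quiver.Path.comp_assoc], hg'⟩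

theorem IsMinimalRel.notMem_of_eq_comp {i j m : QVert Q} {g : Quiver.Path i j}
    (hg : IsMinimalRel Idl g) {u : Quiver.Path i m} {v : Quiver.Path m j}
    (h : g = u.comp v) (hu : u.length ≠ 0) (hv : v.length ≠ 0) : ¬ Idl u ∧ ¬ Idl v :=
  ⟨fun hu' => hv (hg.2 .nil u v (by simpa using h) hu').2,
    fun hv' => hu (hg.2 u v .nil (by simpa using h) hv').1⟩

end Ideal

section Peak

variable {Q : FinQuiver n} {Idl : ∀ ⦃i j : QVert Q⦄, Quiver.Path i j → Prop}

/-- `p` lies in the full subquiver `Q_{≤ k}`. -/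
def LiesBelow (k : QVert Q) {i j : QVert Q} (p : Quiver.Path i j) : Prop :=
  ∀ v ∈ pathVerts p, v ≤ k

theorem liesBelow_comp_iff {k i j m : QVert Q} {u : Quiver.Path i j} {v : Quiver.Path j m} :
    LiesBelow k (u.comp v) ↔ LiesBelow k u ∧ LiesBelow k v := by
  simp only [LiesBelow, mem_pathVerts_comp, or_imp, forall_and]

theorem liesBelow_nil (i : QVert Q) : LiesBelow i (Quiver.Path.nil : Quiver.Path i i) := by
  simp [LiesBelow, pathVerts]

theorem LiesBelow.target_le {k i j : QVert Q} {p : Quiver.Path i j} (hp : LiesBelow k p) :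
    j ≤ k :=
  hp j (by rw [pathVerts_eq_vertices]; exact p.end_mem_vertices)

variable (Idl) in
def PeakSplit (i k : QVert Q) : Type :=
  Σ j : QVert Q, {u : Quiver.Path i j // LiesBelow j u ∧ ¬ Idl u} ×
    {v : Quiver.Path j k // LiesBelow j v ∧ ¬ Idl v}

def PeakSplit.toPath {i k : QVert Q} (s : PeakSplit Idl i k) : Quiver.Path i k :=
  s.2.1.1.comp s.2.2.1

theorem IsAdmissible.finite_liesBelow (hadm : IsAdmissible Q Idl) (k i j : QVert Q) :
    Finite {p : Quiver.Path i j // LiesBelow k p ∧ ¬ Idl p} :=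
  hadm.finite_subtype fun _ h => h.2

theorem PeakSplit.finite (hadm : IsAdmissible Q Idl) (i k : QVert Q) :
    Finite (PeakSplit Idl i k) := by
  have := fun j => hadm.finite_liesBelow j i j
  have := fun j => hadm.finite_liesBelow j j k
  exact inferInstanceAs (Finite (Σ j, _ × _))

theorem card_peakSplit (hadm : IsAdmissible Q Idl) (i k : QVert Q) :
    Nat.card (PeakSplit Idl i k) =
      ∑ j : QVert Q, pathCountLe Q Idl j i j * pathCountLe Q Idl j j k := by
  have := fun j => hadm.finite_liesBelow j i j
  have := fun j => hadm.finite_liesBelow j j k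
  simp only [PeakSplit, Nat.card_sigma, Nat.card_prod]
  rfl

theorem PeakSplit.exists_toPath_eq (hI : IsPathIdeal Q Idl) {i k : QVert Q}
    {p : Quiver.Path i k} (hp : ¬ Idl p) :
    ∃ s : PeakSplit Idl i k, s.toPath = p := by
  obtain ⟨j, hj, hmax⟩ := p.vertices.toFinset.exists_max_image id
    ⟨i, List.mem_toFinset.2 p.start_mem_vertices⟩
  obtain ⟨u, v, rfl⟩ := p.exists_eq_comp_of_mem_vertices (List.mem_toFinset.1 hj)
  have hbelow : LiesBelow j (u.comp v) := fun w hw =>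
    hmax w (by simpa [pathVerts_eq_vertices] using hw)
  obtain ⟨hu, hv⟩ := liesBelow_comp_iff.1 hbelow
  exact ⟨⟨j, ⟨u, hu, fun h => hp (hI.comp_mem_right h v)⟩,
    ⟨v, hv, fun h => hp (hI.comp_mem_left u h)⟩⟩, rfl⟩

variable (Q Idl) in
def PeakCyclesTrivial : Prop :=
  ∀ ⦃j : QVert Q⦄ (c : Quiver.Path j j), LiesBelow j c → ¬ Idl c → c = .nil

theorem pathCountLe_self_eq_one_iff (hadm : IsAdmissible Q Idl) :
    (∀ i : QVert Q, pathCountLe Q Idl i i i = 1) ↔ PeakCyclesTrivial Q Idl := by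
  have hnil (i : QVert Q) : LiesBelow i (Quiver.Path.nil : Quiver.Path i i) ∧ ¬ Idl .nil :=
    ⟨liesBelow_nil i, hadm.nil_notMem i⟩
  simp only [pathCountLe, Nat.card_eq_one_iff_unique]
  refine ⟨fun h j c hc hcI => ?_, fun h i => ⟨⟨fun a b => ?_⟩, ⟨⟨.nil, hnil i⟩⟩⟩⟩
  · exact congrArg Subtype.val ((h j).1.allEq ⟨c, hc, hcI⟩ ⟨.nil, hnil j⟩)
  · exact Subtype.ext ((h _ a.2.1 a.2.2).trans (h _ b.2.1 b.2.2).symm)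

theorem PeakSplit.liesBelow_toPath {i k : QVert Q} (s : PeakSplit Idl i k) :
    LiesBelow s.1 s.toPath :=
  liesBelow_comp_iff.2 ⟨s.2.1.2.1, s.2.2.2.1⟩

theorem PeakSplit.fst_le_of_toPath_eq {i k : QVert Q} {s t : PeakSplit Idl i k}
    (h : s.toPath = t.toPath) : s.1 ≤ t.1 := by
  have ht := t.liesBelow_toPath
  rw [← h] at ht
  exact (liesBelow_comp_iff.1 ht).1.target_le

theorem PeakSplit.toPath_injective (hI : IsPathIdeal Q Idl) (hcyc : PeakCyclesTrivial Q Idl)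
    {i k : QVert Q} : Function.Injective (PeakSplit.toPath (Idl := Idl) (i := i) (k := k)) := by
  intro s t h
  wlog hle : t.2.2.1.length ≤ s.2.2.1.length generalizing s t
  · exact (this h.symm (le_of_not_ge hle)).symm
  have hj :=
    le_antisymm (PeakSplit.fst_le_of_toPath_eq h) (PeakSplit.fst_le_of_toPath_eq h.symm)
  obtain ⟨j, ⟨u, hu, huI⟩, ⟨v, hv, hvI⟩⟩ := s
  obtain ⟨_, ⟨u', hu', hu'I⟩, ⟨v', hv', hv'I⟩⟩ := t
  obtain rfl : j = _ := hj
  obtain ⟨w, rfl, rfl⟩ := Quiver.Path.exists_eq_comp_of_comp_eq_comp u v u' v' h hle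
  obtain rfl := hcyc w (liesBelow_comp_iff.1 hu').2 fun hwI => hu'I (hI.comp_mem_left u hwI)
  simp only [Quiver.Path.comp_nil, Quiver.Path.nil_comp]
  rfl

theorem pathCount_lt_card_peakSplit (hI : IsPathIdeal Q Idl) (hadm : IsAdmissible Q Idl)
    (hcyc : PeakCyclesTrivial Q Idl) {a b m : QVert Q} {g : Quiver.Path a b}
    (hg : IsMinimalRel Idl g) (hm : m ∈ internalVerts g) (hmax : LiesBelow m g) :
    pathCount Q Idl a b < Nat.card (PeakSplit Idl a b) := by
  obtain ⟨u, v, rfl, hu0, hv0⟩ := mem_internalVerts_iff.1 hm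
  obtain ⟨huI, hvI⟩ := hg.notMem_of_eq_comp rfl hu0 hv0
  obtain ⟨hu, hv⟩ := liesBelow_comp_iff.1 hmax
  have := PeakSplit.finite hadm a b
  have : Finite {p : Quiver.Path a b | ¬ Idl p} := hadm.finite_subtype fun _ h => h
  have hsub :
      insert (u.comp v) {p | ¬ Idl p} ⊆ Set.range (PeakSplit.toPath (Idl := Idl)) := by
    rintro p (rfl | hp)
    · exact ⟨⟨m, ⟨u, hu, huI⟩, ⟨v, hv, hvI⟩⟩, rfl⟩
    · exact PeakSplit.exists_toPath_eq hI hp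
  calc pathCount Q Idl a b < (insert (u.comp v) {p | ¬ Idl p}).ncard := by
        rw [Set.ncard_insert_of_notMem (fun (h : ¬ Idl (u.comp v)) => h hg.1),
          ← Nat.card_coe_set_eq]
        exact Nat.lt_succ_self _
    _ ≤ (Set.range (PeakSplit.toPath (Idl := Idl))).ncard := Set.ncard_le_ncard hsub
    _ = Nat.card (PeakSplit Idl a b) :=
        Set.ncard_range_of_injective (PeakSplit.toPath_injective hI hcyc)

end Peak

section GreenSchroll

variable {Q : FinQuiver n} {Idl : ∀ ⦃i j : QVert Q⦄, Quiver.Path i j → Prop}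

theorem GreenSchrollCondition.comp_notMem (hGS : GreenSchrollCondition Q Idl)
    (hI : IsPathIdeal Q Idl) {i m k : QVert Q} {u : Quiver.Path i m} {v : Quiver.Path m k}
    (hu : LiesBelow m u) (hv : LiesBelow m v) (huI : ¬ Idl u) (hvI : ¬ Idl v) :
    ¬ Idl (u.comp v) := by
  intro huvI
  obtain ⟨a, b, x, g, y, hxgy, hg⟩ := exists_isMinimalRel_factor huvI
  rcases Quiver.Path.factor_trichotomy_of_comp_comp_eq_comp hxgy.symm with
    ⟨y', rfl⟩ | ⟨x', rfl⟩ | ⟨g₁, g₂, rfl, h₁, h₂⟩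
  · exact huI (hI x g y' hg.1)
  · exact hvI (hI x' g y hg.1)
  · obtain ⟨w, hw, hmw⟩ := hGS _ hg m (mem_internalVerts_iff.2 ⟨g₁, g₂, rfl, h₁, h₂⟩)
    have hbelow : LiesBelow m ((x.comp (g₁.comp g₂)).comp y) :=
      hxgy ▸ liesBelow_comp_iff.2 ⟨hu, hv⟩
    obtain ⟨hxg, -⟩ := liesBelow_comp_iff.1 hbelow
    exact ((liesBelow_comp_iff.1 hxg).2 w hw).not_gt hmw

theorem GreenSchrollCondition.peakCyclesTrivial (hGS : GreenSchrollCondition Q Idl)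
    (hI : IsPathIdeal Q Idl) (hadm : IsAdmissible Q Idl) : PeakCyclesTrivial Q Idl := by
  intro j c hc hcI
  have hpow (N : ℕ) :
      ∃ d : Quiver.Path j j, LiesBelow j d ∧ ¬ Idl d ∧ N * c.length ≤ d.length := by
    induction N with
    | zero => exact ⟨.nil, liesBelow_nil j, hadm.nil_notMem j, by simp⟩
    | succ N ih =>
      obtain ⟨d, hd, hdI, hlen⟩ := ih
      refine ⟨d.comp c, liesBelow_comp_iff.2 ⟨hd, hc⟩, hGS.comp_notMem hI hd hc hdI hcI, ?_⟩
      rw [Quiver.Path.length_comp, Nat.succ_mul]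
      omega
  obtain ⟨N, hN⟩ := hadm.1
  obtain ⟨d, -, hdI, hlen⟩ := hpow N
  rw [← Quiver.Path.length_eq_zero_iff]
  by_contra hc0
  exact hdI (hN d ((Nat.le_mul_of_pos_right N (Nat.pos_of_ne_zero hc0)).trans hlen))

theorem GreenSchrollCondition.pathCount_eq_card_peakSplit (hGS : GreenSchrollCondition Q Idl)
    (hI : IsPathIdeal Q Idl) (hadm : IsAdmissible Q Idl) (i k : QVert Q) :
    pathCount Q Idl i k = Nat.card (PeakSplit Idl i k) := by
  refine Nat.card_congr (Equiv.ofBijective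
    (fun s => ⟨s.toPath, hGS.comp_notMem hI s.2.1.2.1 s.2.2.2.1 s.2.1.2.2 s.2.2.2.2⟩)
    ⟨fun s t h => ?_, fun p => ?_⟩).symm
  · exact PeakSplit.toPath_injective hI (hGS.peakCyclesTrivial hI hadm) (congrArg Subtype.val h)
  · obtain ⟨s, hs⟩ := PeakSplit.exists_toPath_eq hI p.2
    exact ⟨s, Subtype.ext hs⟩

end GreenSchroll

/-- **Lemma.** For an admissible monomial ideal `Idl` of a finite loopless quiver, the
numerical path-count condition `π^i_{ii} = 1 ∧ π^n_{ik} = ∑_j π^j_{ij} π^j_{jk}` holds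
if and only if all maximal vertices of every path in the canonical generating set `G`
are external. -/
theorem pathCountCondition_iff_greenSchroll (Q : FinQuiver n)
    (Idl : ∀ ⦃i j : QVert Q⦄, Quiver.Path i j → Prop)
    (hIdl : IsPathIdeal Q Idl) (hadm : IsAdmissible Q Idl) :
    PathCountCondition Q Idl ↔ GreenSchrollCondition Q Idl := by
  constructor
  · rintro ⟨hself, hsum⟩ a b g hg m hm
    by_contra! hmax
    have hlt := pathCount_lt_card_peakSplit hIdl hadm
      ((pathCountLe_self_eq_one_iff hadm).1 hself) hg hm hmax
    rw [card_peakSplit hadm, ← hsum] at hlt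
    exact lt_irrefl _ hlt
  · intro hGS
    refine ⟨(pathCountLe_self_eq_one_iff hadm).2 (hGS.peakCyclesTrivial hIdl hadm), fun i k => ?_⟩
    rw [hGS.pathCount_eq_card_peakSplit hIdl hadm, card_peakSplit hadm]

end HWPaper
end
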